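/- Let $n\ge 1$ be an integer and $\zeta = e^{2\pi i/n}$, and let $c_u$ for $0\le u\le n^2-1$ denote the aperiodic autocorrelations of the coefficient sequence of $h_n$. Then for all integers $u, v$ with $0\le u < n$, $0 < v < n$ (equivalently $(u,v)\ne(0,0)$ with $v\ne 0$), one has $c_{nu+v} = -\zeta^v\, c_{nu+n-v}$, where when $nu + n - v > n^2 - 1$ (i.e., $u = n-1$) this is interpreted with $c_w = 0$ for $w \ge n^2$. -/

import Mathlib

/-- The coefficients of `h_n`: `b_{nj+k} = ζ^{jk}` with `ζ = e^{2πi/n}`, for `0 ≤ j,k < n`;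
here `j = m / n` and `k = m % n` for an index `m = nj + k`. -/
noncomputable def hCoef (n : ℕ) (m : ℕ) : ℂ :=
  Complex.exp (2 * Real.pi * Complex.I / n) ^ ((m / n) * (m % n))

/-- The aperiodic autocorrelations `c_u = ∑_{0 ≤ m, m+u < n²} b_m conj(b_{m+u})` of the
coefficient sequence of `h_n`; note that this is automatically `0` for `u ≥ n²`, since the
range of summation is then empty. -/
noncomputable def hCorr (n : ℕ) (u : ℕ) : ℂ :=
  ∑ m ∈ Finset.range (n ^ 2 - u), hCoef n m * (starRingEnd ℂ) (hCoef n (m + u))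

/-!
Write an index as `m = n j + k` with `0 ≤ k < n`. At shift `n u + v` the entry `(j, k)` is paired
with `(j + u, k + v)` when `k < n - v` and with `(j + u + 1, k + v - n)` otherwise, and in both
blocks the products `b_m conj b_{m'}` factor. With `ξ = ζ⁻¹` and `n = u + 1 + q = v + w` this gives
  `c_{nu+v} = ξ^{uv} (∑_{j ≤ q} ξ^{vj}) (∑_{k < w} ξ^{uk})`
    `+ (∑_{j < q} ξ^{vj}) (∑_{k < v} ξ^{(u+1)k})`.
Reversing the `j`-sums (`ξ^v ξ^w = 1`) and merging the two `k`-sums of the same ratio gives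
  `ξ^v c_{nu+v} + c_{nu+w} = (∑_{j ≤ q} ξ^{wj}) (∑_{k < n} ξ^{uk})`
    `+ (∑_{j < q} ξ^{wj}) (∑_{k < n} ξ^{(u+1)k})`.
A full geometric sum of an `n`-th root of unity other than `1` vanishes, and in the two exceptional
cases `u = 0` and `u + 1 = n` the other factor is `∑_{j < n} ξ^{wj} = 0`, respectively empty.
-/

open Finset

noncomputable def ζ (n : ℕ) : ℂ := Complex.exp (2 * Real.pi * Complex.I / n)

theorem geom_sum_add {R : Type*} [Semiring R] (x : R) (a b : ℕ) :
    ∑ i ∈ range (a + b), x ^ i = ∑ i ∈ range a, x ^ i + x ^ a * ∑ i ∈ range b, x ^ i := by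
  rw [sum_range_add, mul_sum]
  simp only [pow_add]

theorem pow_mul_geom_sum_of_mul_eq_one {R : Type*} [CommRing R] {x y : R} (h : x * y = 1)
    (N : ℕ) : x ^ N * ∑ i ∈ range N, y ^ i = x * ∑ i ∈ range N, x ^ i := by
  induction N with
  | zero => simp
  | succ N ih =>
    have hxy : (x * y) ^ N = 1 := by rw [h, one_pow]
    rw [sum_range_succ, geom_sum_succ]
    linear_combination x * ih + x * hxy

theorem IsPrimitiveRoot.geom_sum_pow_eq_zero {R : Type*} [CommRing R] [IsDomain R] {ξ : R}
    {n a : ℕ} (hξ : IsPrimitiveRoot ξ n) (ha : 0 < a) (han : a < n) :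
    ∑ i ∈ range n, (ξ ^ a) ^ i = 0 := by
  have hpow : (ξ ^ a) ^ n = 1 := by rw [← pow_mul, mul_comm, pow_mul, hξ.pow_eq_one, one_pow]
  have h := mul_geom_sum (ξ ^ a) n
  rw [hpow, sub_self] at h
  exact (mul_eq_zero.1 h).resolve_left (sub_ne_zero.2 (hξ.pow_ne_one_of_pos_of_lt ha.ne' han))

theorem pow_eq_pow_of_natCast_eq {M : Type*} [Monoid M] {x : M} {n a b : ℕ} (hx : x ^ n = 1)
    (h : (a : ZMod n) = b) : x ^ a = x ^ b :=
  pow_eq_pow_of_modEq ((ZMod.natCast_eq_natCast_iff a b n).1 h) hx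

theorem sum_range_mul_add {M : Type*} [AddCommMonoid M] (f : ℕ → M) (n q r : ℕ) :
    ∑ m ∈ range (n * q + r), f m =
      ∑ j ∈ range q, ∑ k ∈ range n, f (n * j + k) + ∑ k ∈ range r, f (n * q + k) := by
  induction q generalizing r with
  | zero => simp
  | succ q ih =>
    rw [show n * (q + 1) + r = n * q + (n + r) by ring, ih, sum_range_add, sum_range_succ,
      add_assoc]
    simp only [mul_add, mul_one, add_assoc]

theorem sum_range_mul_add_of_eq_add {M : Type*} [AddCommMonoid M] (f : ℕ → M) {n r t : ℕ}
    (hn : n = r + t) (q : ℕ) :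
    ∑ m ∈ range (n * q + r), f m =
      ∑ j ∈ range (q + 1), ∑ k ∈ range r, f (n * j + k) +
        ∑ j ∈ range q, ∑ k ∈ range t, f (n * j + r + k) := by
  rw [sum_range_mul_add, show range n = range (r + t) by rw [hn], sum_range_succ]
  simp only [sum_range_add, sum_add_distrib, add_assoc]
  rw [add_comm (∑ j ∈ range q, ∑ k ∈ range t, _)]

theorem conj_ζ (n : ℕ) : starRingEnd ℂ (ζ n) = (ζ n)⁻¹ := by
  rw [ζ, ← Complex.exp_conj, ← Complex.exp_neg]
  congr 1
  simp only [map_div₀, map_mul, Complex.conj_I, map_natCast, map_ofNat, Complex.conj_ofReal]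
  ring

theorem ζ_ne_zero (n : ℕ) : ζ n ≠ 0 := Complex.exp_ne_zero _

theorem isPrimitiveRoot_ζ {n : ℕ} (hn : n ≠ 0) : IsPrimitiveRoot (ζ n) n :=
  Complex.isPrimitiveRoot_exp n hn

theorem hCoef_nmul_add {n k : ℕ} (j : ℕ) (hk : k < n) :
    hCoef n (n * j + k) = ζ n ^ (j * k) := by
  rw [hCoef, Nat.mul_add_div (by omega), Nat.div_eq_of_lt hk, Nat.mul_add_mod,
    Nat.mod_eq_of_lt hk, add_zero, ζ]

theorem conj_hCoef_nmul_add {n k : ℕ} (j : ℕ) (hk : k < n) :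
    starRingEnd ℂ (hCoef n (n * j + k)) = (ζ n)⁻¹ ^ (j * k) := by
  rw [hCoef_nmul_add j hk, map_pow, conj_ζ]

theorem hCorr_nmul_add {n u v q w : ℕ} (hq : n = u + 1 + q) (hw : n = v + w) :
    hCorr n (n * u + v) =
      (ζ n)⁻¹ ^ (u * v) * (∑ j ∈ range (q + 1), ((ζ n)⁻¹ ^ v) ^ j) *
          ∑ k ∈ range w, ((ζ n)⁻¹ ^ u) ^ k +
        (∑ j ∈ range q, ((ζ n)⁻¹ ^ v) ^ j) * ∑ k ∈ range v, ((ζ n)⁻¹ ^ (u + 1)) ^ k := by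
  set ω := ζ n
  have hωx : ∀ a, ω ^ a * ω⁻¹ ^ a = 1 := fun a ↦ by
    rw [← mul_pow, mul_inv_cancel₀ (ζ_ne_zero n), one_pow]
  have hxv : ω⁻¹ ^ v = ω ^ w := by
    have hωn : ω ^ (v + w) = 1 := hw ▸ (isPrimitiveRoot_ζ (by omega)).pow_eq_one
    linear_combination ω ^ w * hωx v - ω⁻¹ ^ v * hωn
  have hlen : n ^ 2 - (n * u + v) = n * q + w := by
    refine Nat.sub_eq_of_eq_add ?_
    calc n ^ 2 = n * (u + 1 + q) := by rw [← hq, sq]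
      _ = n * q + w + (n * u + v) := by rw [mul_add, mul_add, mul_one, hw]; ring
  rw [hCorr, hlen, sum_range_mul_add_of_eq_add _ (hw.trans (add_comm v w))]
  congr 1
  · rw [mul_assoc, sum_mul_sum, mul_sum]
    refine sum_congr rfl fun j _ ↦ ?_
    rw [mul_sum]
    refine sum_congr rfl fun k hk ↦ ?_
    have hk : k < w := mem_range.1 hk
    rw [show n * j + k + (n * u + v) = n * (j + u) + (k + v) by ring,
      hCoef_nmul_add j (by omega), conj_hCoef_nmul_add _ (by omega)]
    linear_combination ω⁻¹ ^ (j * v + u * k + u * v) * hωx (j * k)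
  · rw [sum_mul_sum]
    refine sum_congr rfl fun j _ ↦ sum_congr rfl fun k hk ↦ ?_
    have hk : k < v := mem_range.1 hk
    rw [show n * j + w + k + (n * u + v) = n * (j + u + 1) + k by rw [hw]; ring, add_assoc,
      hCoef_nmul_add j (by omega), conj_hCoef_nmul_add _ (by omega), hxv]
    linear_combination ω ^ (j * w) * ω⁻¹ ^ ((u + 1) * k) * hωx (j * k)

theorem inv_pow_mul_hCorr_add_hCorr {n u v q w : ℕ} (hq : n = u + 1 + q) (hw : n = v + w) :
    (ζ n)⁻¹ ^ v * hCorr n (n * u + v) + hCorr n (n * u + w) =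
      (∑ j ∈ range (q + 1), ((ζ n)⁻¹ ^ w) ^ j) * ∑ k ∈ range n, ((ζ n)⁻¹ ^ u) ^ k +
        (∑ j ∈ range q, ((ζ n)⁻¹ ^ w) ^ j) * ∑ k ∈ range n, ((ζ n)⁻¹ ^ (u + 1)) ^ k := by
  set x := (ζ n)⁻¹
  have hxn : x ^ n = 1 := (isPrimitiveRoot_ζ (by omega)).inv.pow_eq_one
  have hvw : x ^ v * x ^ w = 1 := by rw [← pow_add, ← hw, hxn]
  have hwv : x ^ w * x ^ v = 1 := by rw [mul_comm, hvw]
  have hq' : ((u + 1 + q : ℕ) : ZMod n) = 0 := by rw [← hq, ZMod.natCast_self]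
  have hw' : ((v + w : ℕ) : ZMod n) = 0 := by rw [← hw, ZMod.natCast_self]
  push_cast at hq' hw'
  have hwq : (x ^ w) ^ (q + 1) = x ^ (u * v) := by
    rw [← pow_mul]
    refine pow_eq_pow_of_natCast_eq hxn ?_
    push_cast
    linear_combination ((q : ZMod n) + 1) * hw' - (v : ZMod n) * hq'
  have hvq : (x ^ v) ^ q = (x ^ (u + 1)) ^ w := by
    rw [← pow_mul, ← pow_mul]
    refine pow_eq_pow_of_natCast_eq hxn ?_
    push_cast
    linear_combination (v : ZMod n) * hq' - ((u : ZMod n) + 1) * hw'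
  have hrev : x ^ v * x ^ (u * v) * ∑ j ∈ range (q + 1), (x ^ v) ^ j =
      ∑ j ∈ range (q + 1), (x ^ w) ^ j := by
    rw [← hwq, mul_assoc, pow_mul_geom_sum_of_mul_eq_one hwv, ← mul_assoc, hvw, one_mul]
  have hrev' : x ^ v * ∑ j ∈ range q, (x ^ v) ^ j =
      (x ^ (u + 1)) ^ w * ∑ j ∈ range q, (x ^ w) ^ j := by
    have hvwq : (x ^ v) ^ q * (x ^ w) ^ q = 1 := by rw [← mul_pow, hvw, one_pow]
    rw [← hvq]
    linear_combination (x ^ v) ^ q * x ^ v * pow_mul_geom_sum_of_mul_eq_one hwv q -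
      x ^ v * (∑ j ∈ range q, (x ^ v) ^ j) * hvwq +
      (x ^ v) ^ q * (∑ j ∈ range q, (x ^ w) ^ j) * hvw
  have hn : n = w + v := hw.trans (add_comm v w)
  have hsplit := geom_sum_add (x ^ u) w v
  have hsplit' := geom_sum_add (x ^ (u + 1)) w v
  rw [← hn] at hsplit hsplit'
  rw [hCorr_nmul_add hq hw, hCorr_nmul_add hq hn]
  linear_combination (∑ k ∈ range w, (x ^ u) ^ k) * hrev +
    (∑ k ∈ range v, (x ^ (u + 1)) ^ k) * hrev' -
    (∑ j ∈ range (q + 1), (x ^ w) ^ j) * hsplit - (∑ j ∈ range q, (x ^ w) ^ j) * hsplit'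

theorem IsPrimitiveRoot.geom_sum_mul_geom_sum_add_eq_zero {R : Type*} [CommRing R]
    [IsDomain R] {x : R} {n u v q w : ℕ} (hx : IsPrimitiveRoot x n) (hq : n = u + 1 + q)
    (hw : n = v + w) (hv : 0 < v) (hw0 : 0 < w) :
    (∑ j ∈ range (q + 1), (x ^ w) ^ j) * ∑ k ∈ range n, (x ^ u) ^ k +
      (∑ j ∈ range q, (x ^ w) ^ j) * ∑ k ∈ range n, (x ^ (u + 1)) ^ k = 0 := by
  have hrow : (∑ j ∈ range (q + 1), (x ^ w) ^ j) * ∑ k ∈ range n, (x ^ u) ^ k = 0 := by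
    rcases Nat.eq_zero_or_pos u with rfl | hu
    · rw [show q + 1 = n by omega, hx.geom_sum_pow_eq_zero hw0 (by omega), zero_mul]
    · rw [hx.geom_sum_pow_eq_zero hu (by omega), mul_zero]
  have hrow' : (∑ j ∈ range q, (x ^ w) ^ j) * ∑ k ∈ range n, (x ^ (u + 1)) ^ k = 0 := by
    rcases Nat.eq_zero_or_pos q with rfl | hq0
    · rw [sum_range_zero, zero_mul]
    · rw [hx.geom_sum_pow_eq_zero (by omega) (by omega), mul_zero]
  rw [hrow, hrow', add_zero]

theorem hCorr_symmetry_general (n : ℕ) (u v : ℕ) (hu : u < n) (hv1 : 0 < v) (hv2 : v < n) :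
    hCorr n (n * u + v) =
      -(Complex.exp (2 * Real.pi * Complex.I / n)) ^ v * hCorr n (n * u + (n - v)) := by
  obtain ⟨q, hq⟩ : ∃ q, n = u + 1 + q := ⟨n - u - 1, by omega⟩
  have hw : n = v + (n - v) := (Nat.add_sub_of_le hv2.le).symm
  have key : (ζ n)⁻¹ ^ v * hCorr n (n * u + v) + hCorr n (n * u + (n - v)) = 0 := by
    rw [inv_pow_mul_hCorr_add_hCorr hq hw]
    exact (isPrimitiveRoot_ζ (by omega)).inv.geom_sum_mul_geom_sum_add_eq_zero hq hw hv1
      (by omega)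
  have hζ : ζ n ^ v * (ζ n)⁻¹ ^ v = 1 := by
    rw [← mul_pow, mul_inv_cancel₀ (ζ_ne_zero n), one_pow]
  change _ = -ζ n ^ v * _
  linear_combination ζ n ^ v * key - hCorr n (n * u + v) * hζ

/-- For `0 ≤ u < n` and `0 < v < n`, one has `c_{nu+v} = -ζ^v c_{nu+n-v}`. -/
theorem hCorr_symmetry (n : ℕ) (hn : 1 ≤ n) (u v : ℕ) (hu : u < n) (hv1 : 0 < v) (hv2 : v < n) :
    hCorr n (n * u + v) =
      -(Complex.exp (2 * Real.pi * Complex.I / n)) ^ v * hCorr n (n * u + (n - v)) :=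
  hCorr_symmetry_general n u v hu hv1 hv2
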